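/- Fix a positive integer k. For all complex q with |q| < 1, the (2k+3)-agonal number theorem holds: (q;q)_∞ = 1 + ∑_{m=1}^{∞} (-1)^m [ (q^{m+1};q)_{(k-1)m} q^{m((2k+1)m+1)/2} + ∑_{j=0}^{k-1} (q^m;q)_{(k-1)m-j} q^{m((2k+1)m-2j-1)/2} ]. -/

import Mathlib

/-!
Write `Φ(a, m) = ∑_{n ≥ 0} aⁿ (a;q)_{n+m}` (`pochSeries q a m`) and, with `K = k - 1`,
`R_M = q^{(2K+3)·C(M+1,2) + M + 1} Φ(q^{M+1}, KM)` (`remainder K q M`), so that `R_M = O(|q|^M)`.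
Peeling off the factor `1 - a` of `(a;q)_{n+m+1}` and summing by parts gives
`Φ(a, m+1) = (aq;q)_m - a² q^{m+1} Φ(aq, m)`. Applied after splitting off the first `k` terms
of `Φ(q^{m+1}, Km)`, this shows that the `m`-th bracket of the theorem is `R_m + R_{m+1}`, so the
alternating series telescopes to `-R_0`; and `R_0 = ∑ q^{n+1} (q;q)_n = 1 - (q;q)_∞`.
-/

open Finset

section Telescoping

variable {R : Type*} [Ring R] [TopologicalSpace R] [IsTopologicalRing R]

theorem Summable.one_sub_mul_tsum [T2Space R] {G : ℕ → R} (hG : Summable G) (x : R) :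
    (1 - x) * ∑' n, G n = G 0 + ∑' n, (G (n + 1) - x * G n) := by
  rw [((summable_nat_add_iff 1).mpr hG).tsum_sub (hG.mul_left x), hG.tsum_mul_left,
    hG.tsum_eq_zero_add, sub_mul, one_mul]
  abel

theorem hasSum_neg_one_pow_mul_add_succ {F : ℕ → R} (hF : Summable fun m ↦ (-1) ^ m * F m) :
    HasSum (fun m ↦ (-1) ^ (m + 1) * (F m + F (m + 1))) (-F 0) := by
  have h := hF.hasSum.neg.add ((hasSum_nat_add_iff' 1).mpr hF.hasSum)
  rw [sum_range_one, pow_zero, one_mul, sub_eq_add_neg, neg_add_cancel_left] at h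
  refine h.congr_fun fun m ↦ ?_
  rw [pow_succ, mul_add, mul_neg_one, neg_mul]

end Telescoping

namespace PolygonalNumberTheorem

def qPochhammer {R : Type*} [CommRing R] (a q : R) (n : ℕ) : R :=
  ∏ i ∈ range n, (1 - a * q ^ i)

section Algebra

variable {R : Type*} [CommRing R] (a q : R)

theorem qPochhammer_succ (n : ℕ) :
    qPochhammer a q (n + 1) = qPochhammer a q n * (1 - a * q ^ n) :=
  prod_range_succ _ _

theorem qPochhammer_succ' (n : ℕ) :
    qPochhammer a q (n + 1) = (1 - a) * qPochhammer (a * q) q n := by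
  simp only [qPochhammer, prod_range_succ', pow_succ', pow_zero, mul_one, mul_assoc, mul_comm]

end Algebra

section Analysis

variable {q : ℂ}

theorem norm_qPochhammer_le (hq : ‖q‖ < 1) {a : ℂ} (ha : ‖a‖ ≤ 1) (n : ℕ) :
    ‖qPochhammer a q n‖ ≤ Real.exp (1 - ‖q‖)⁻¹ := by
  have h0 := norm_nonneg q
  have hfactor (i : ℕ) : ‖1 - a * q ^ i‖ ≤ Real.exp (‖q‖ ^ i) := calc
    ‖1 - a * q ^ i‖ ≤ 1 + ‖a‖ * ‖q‖ ^ i := by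
      simpa [norm_pow] using norm_sub_le (1 : ℂ) (a * q ^ i)
    _ ≤ ‖q‖ ^ i + 1 := by nlinarith [pow_nonneg h0 i]
    _ ≤ Real.exp (‖q‖ ^ i) := Real.add_one_le_exp _
  calc ‖qPochhammer a q n‖ = ∏ i ∈ range n, ‖1 - a * q ^ i‖ := norm_prod _ _
    _ ≤ ∏ i ∈ range n, Real.exp (‖q‖ ^ i) :=
      prod_le_prod (fun _ _ ↦ norm_nonneg _) fun i _ ↦ hfactor i
    _ = Real.exp (∑ i ∈ range n, ‖q‖ ^ i) := (Real.exp_sum _ _).symm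
    _ ≤ Real.exp (1 - ‖q‖)⁻¹ := by
      rw [Real.exp_le_exp, ← tsum_geometric_of_lt_one h0 hq]
      exact (summable_geometric_of_lt_one h0 hq).sum_le_tsum _ fun i _ ↦ pow_nonneg h0 i

theorem summable_pow_mul_qPochhammer (hq : ‖q‖ < 1) {x b : ℂ} (hx : ‖x‖ < 1) (hb : ‖b‖ ≤ 1)
    (m : ℕ) : Summable fun n ↦ x ^ n * qPochhammer b q (n + m) := by
  refine .of_norm_bounded
    ((summable_geometric_of_lt_one (norm_nonneg x) hx).mul_left (Real.exp (1 - ‖q‖)⁻¹)) fun n ↦ ?_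
  rw [norm_mul, norm_pow, mul_comm]
  exact mul_le_mul_of_nonneg_right (norm_qPochhammer_le hq hb _) (by positivity)

noncomputable def pochSeries (q a : ℂ) (m : ℕ) : ℂ :=
  ∑' n, a ^ n * qPochhammer a q (n + m)

variable (hq : ‖q‖ < 1) {a : ℂ} (ha : ‖a‖ < 1)
include hq ha

theorem norm_pochSeries_le (m : ℕ) :
    ‖pochSeries q a m‖ ≤ Real.exp (1 - ‖q‖)⁻¹ * (1 - ‖a‖)⁻¹ := by
  refine tsum_of_norm_bounded ((hasSum_geometric_of_lt_one (norm_nonneg a) ha).mul_left _)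
    fun n ↦ ?_
  rw [norm_mul, norm_pow, mul_comm]
  exact mul_le_mul_of_nonneg_right (norm_qPochhammer_le hq ha.le _) (by positivity)

theorem pochSeries_eq_sum_add (m N : ℕ) :
    pochSeries q a m = ∑ t ∈ range N, a ^ t * qPochhammer a q (t + m) +
      a ^ N * pochSeries q a (m + N) := by
  rw [pochSeries, ← (summable_pow_mul_qPochhammer hq ha ha.le m).sum_add_tsum_nat_add N,
    pochSeries, ← tsum_mul_left]
  congr 1
  refine tsum_congr fun n ↦ ?_
  rw [pow_add, add_right_comm n N m, add_assoc n m N]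
  ring

/-- Euler's peeling of the factor `1 - a`, followed by summation by parts. -/
theorem pochSeries_succ (m : ℕ) :
    pochSeries q a (m + 1) =
      qPochhammer (a * q) q m - a ^ 2 * q ^ (m + 1) * pochSeries q (a * q) m := by
  have haq : ‖a * q‖ ≤ 1 := by
    rw [norm_mul]; nlinarith [norm_nonneg a, norm_nonneg q]
  have hG := summable_pow_mul_qPochhammer hq ha haq m
  calc pochSeries q a (m + 1)
      = (1 - a) * ∑' n, a ^ n * qPochhammer (a * q) q (n + m) := by
        rw [pochSeries, ← tsum_mul_left]
        refine tsum_congr fun n ↦ ?_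
        rw [← add_assoc, qPochhammer_succ']
        ring
    _ = qPochhammer (a * q) q m + ∑' n, -(a ^ 2 * q ^ (m + 1) * ((a * q) ^ n *
          qPochhammer (a * q) q (n + m))) := by
        rw [hG.one_sub_mul_tsum]
        congr 1
        · simp
        · refine tsum_congr fun n ↦ ?_
          rw [add_right_comm, qPochhammer_succ]
          ring
    _ = _ := by rw [tsum_neg, tsum_mul_left, pochSeries, sub_eq_add_neg]

end Analysis

def remainderExponent (K M : ℕ) : ℕ :=
  (2 * K + 3) * (M + 1).choose 2 + M + 1

section Exponents

theorem succ_choose_two_mul_two (m : ℕ) : (m + 1).choose 2 * 2 = (m + 1) * m := by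
  simpa using (Nat.add_one_mul_choose_eq m 1).symm

variable (K m : ℕ)

theorem remainderExponent_succ :
    remainderExponent K m + (m + 1) * (K + 3) + (K * (m + 1) + 1) =
      remainderExponent K (m + 1) := by
  rw [remainderExponent, remainderExponent, Nat.choose_succ_succ' (m + 1) 1,
    Nat.choose_one_right]
  ring

theorem leading_exponent_eq :
    (m + 1) * ((2 * (K + 1) + 1) * (m + 1) + 1) / 2 =
      remainderExponent K m + (m + 1) * (K + 1) := by
  refine Nat.div_eq_of_eq_mul_left two_pos ?_
  rw [remainderExponent]
  linear_combination (2 * K + 3) * (succ_choose_two_mul_two m).symm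

theorem inner_exponent_eq {t : ℕ} (ht : t ≤ K) :
    (m + 1) * ((2 * (K + 1) + 1) * (m + 1) - 2 * (K - t) - 1) / 2 =
      remainderExponent K m + (m + 1) * t := by
  have hnum : (2 * (K + 1) + 1) * (m + 1) - 2 * (K - t) - 1 = (2 * K + 3) * m + 2 * t + 2 := by
    rw [show 2 * (K + 1) + 1 = 2 * K + 3 by ring, Nat.mul_succ]
    omega
  rw [hnum]
  refine Nat.div_eq_of_eq_mul_left two_pos ?_
  rw [remainderExponent]
  linear_combination (2 * K + 3) * (succ_choose_two_mul_two m).symm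

end Exponents

noncomputable def remainder (K : ℕ) (q : ℂ) (M : ℕ) : ℂ :=
  q ^ remainderExponent K M * pochSeries q (q ^ (M + 1)) (K * M)

section Remainder

variable {q : ℂ} (hq : ‖q‖ < 1) (K : ℕ)
include hq

theorem remainder_zero : remainder K q 0 = 1 - ∏' i, (1 - q ^ (i + 1)) := by
  have hterm (n : ℕ) : q ^ (n + 1) * ∏ j ∈ Iio n, (1 - q ^ (j + 1)) =
      q * (q ^ n * qPochhammer q q (n + 0)) := by
    simp only [Nat.Iio_eq_range, qPochhammer, add_zero, pow_succ']
    ring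
  have hsum : Summable fun n ↦ q ^ (n + 1) * ∏ j ∈ Iio n, (1 - q ^ (j + 1)) := by
    simpa only [hterm] using (summable_pow_mul_qPochhammer hq hq hq.le 0).mul_left q
  rw [tprod_one_sub_ordered hsum (ModularForm.multipliable_one_sub_pow hq), tsum_congr hterm,
    tsum_mul_left, remainder, remainderExponent, pochSeries]
  simp

theorem norm_remainder_le (M : ℕ) :
    ‖remainder K q M‖ ≤ Real.exp (1 - ‖q‖)⁻¹ * (1 - ‖q‖)⁻¹ * ‖q‖ ^ M := by
  have h0 := norm_nonneg q
  have hqM : ‖q ^ (M + 1)‖ ≤ ‖q‖ := by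
    rw [norm_pow]; exact pow_le_of_le_one h0 hq.le (by omega)
  have hpow : ‖q‖ ^ remainderExponent K M ≤ ‖q‖ ^ M :=
    pow_le_pow_of_le_one h0 hq.le (by rw [remainderExponent]; omega)
  have hseries : ‖pochSeries q (q ^ (M + 1)) (K * M)‖ ≤
      Real.exp (1 - ‖q‖)⁻¹ * (1 - ‖q‖)⁻¹ := by
    refine (norm_pochSeries_le hq (hqM.trans_lt hq) _).trans ?_
    gcongr
  rw [remainder, norm_mul, norm_pow, mul_comm]
  exact mul_le_mul hseries hpow (by positivity) (by positivity)

theorem summable_neg_one_pow_mul_remainder :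
    Summable fun M ↦ (-1) ^ M * remainder K q M := by
  refine .of_norm_bounded ((summable_geometric_of_lt_one (norm_nonneg q) hq).mul_left
    (Real.exp (1 - ‖q‖)⁻¹ * (1 - ‖q‖)⁻¹)) fun M ↦ ?_
  rw [norm_mul, norm_pow, norm_neg, norm_one, one_pow, one_mul]
  exact norm_remainder_le hq K M

theorem remainder_add_remainder_succ (m : ℕ) :
    remainder K q m + remainder K q (m + 1) =
      qPochhammer (q ^ (m + 2)) q (K * (m + 1)) *
          q ^ ((m + 1) * ((2 * (K + 1) + 1) * (m + 1) + 1) / 2) +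
        ∑ j ∈ range (K + 1), qPochhammer (q ^ (m + 1)) q (K * (m + 1) - j) *
          q ^ ((m + 1) * ((2 * (K + 1) + 1) * (m + 1) - 2 * j - 1) / 2) := by
  have ha : ‖q ^ (m + 1)‖ < 1 := by
    rw [norm_pow]; exact pow_lt_one₀ (norm_nonneg q) hq (by omega)
  have hsplit := pochSeries_eq_sum_add hq ha (K * m) (K + 1)
  rw [show K * m + (K + 1) = K * (m + 1) + 1 by ring, pochSeries_succ hq ha,
    ← pow_succ] at hsplit
  have hfirst : qPochhammer (q ^ (m + 2)) q (K * (m + 1)) *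
      q ^ ((m + 1) * ((2 * (K + 1) + 1) * (m + 1) + 1) / 2) =
      q ^ remainderExponent K m *
        ((q ^ (m + 1)) ^ (K + 1) * qPochhammer (q ^ (m + 1 + 1)) q (K * (m + 1))) := by
    rw [leading_exponent_eq, pow_add, ← pow_mul]
    ring
  have hsum : ∑ j ∈ range (K + 1), qPochhammer (q ^ (m + 1)) q (K * (m + 1) - j) *
      q ^ ((m + 1) * ((2 * (K + 1) + 1) * (m + 1) - 2 * j - 1) / 2) =
      q ^ remainderExponent K m *
        ∑ t ∈ range (K + 1), (q ^ (m + 1)) ^ t * qPochhammer (q ^ (m + 1)) q (t + K * m) := by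
    rw [mul_sum, ← sum_range_reflect]
    refine sum_congr rfl fun t ht ↦ ?_
    have htK : t ≤ K := Nat.lt_succ_iff.mp (mem_range.mp ht)
    rw [Nat.add_sub_cancel, inner_exponent_eq K m htK, ← pow_mul, ← mul_assoc, ← pow_add,
      show K * (m + 1) - (K - t) = t + K * m by rw [Nat.mul_succ]; omega, mul_comm]
  have htail : q ^ remainderExponent K m *
      ((q ^ (m + 1)) ^ (K + 1) * ((q ^ (m + 1)) ^ 2 * q ^ (K * (m + 1) + 1))) =
      q ^ remainderExponent K (m + 1) := by
    rw [← remainderExponent_succ]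
    ring
  rw [hfirst, hsum, remainder, remainder, hsplit, ← htail]
  ring

end Remainder

end PolygonalNumberTheorem

open PolygonalNumberTheorem

/-- The `(2k+3)`-agonal number theorem (`z = -1`, `ℓ = 1` in the `(k,ℓ)`-rank
identity): for `|q| < 1`,
`(q;q)_∞ = 1 + ∑_{m=1}^∞ (-1)^m [ (q^{m+1};q)_{(k-1)m} q^{m((2k+1)m+1)/2}
  + ∑_{j=0}^{k-1} (q^m;q)_{(k-1)m-j} q^{m((2k+1)m-2j-1)/2} ]`.
(The outer series index is shifted: `m + 1` plays the role of `m ≥ 1`.) -/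
theorem polygonal_number_theorem (k : ℕ) (hk : 0 < k)
    (q : ℂ) (hq : ‖q‖ < 1) :
    (∏' i : ℕ, (1 - q ^ (i + 1))) =
      1 + ∑' m : ℕ, (-1 : ℂ) ^ (m + 1) *
        ((∏ i ∈ Finset.range ((k - 1) * (m + 1)), (1 - q ^ (m + 2) * q ^ i)) *
            q ^ ((m + 1) * ((2 * k + 1) * (m + 1) + 1) / 2) +
          ∑ j ∈ Finset.range k,
            (∏ i ∈ Finset.range ((k - 1) * (m + 1) - j), (1 - q ^ (m + 1) * q ^ i)) *
              q ^ ((m + 1) * ((2 * k + 1) * (m + 1) - 2 * j - 1) / 2)) := by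
  obtain ⟨K, rfl⟩ : ∃ K, k = K + 1 := ⟨k - 1, by omega⟩
  have htelescope :=
    (hasSum_neg_one_pow_mul_add_succ (summable_neg_one_pow_mul_remainder hq K)).tsum_eq
  simp only [remainder_add_remainder_succ hq, remainder_zero hq, qPochhammer] at htelescope
  simp only [Nat.add_sub_cancel, htelescope]
  ring
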